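/- arXiv:2505.11902 — 2 statements merged into one kernel-verified Lean document; each statement's English description precedes it below -/
import Mathlib

section
/- Let F : ℝ^d → ℝ be differentiable with L-Lipschitz gradient (L > 0). Let x ∈ ℝ^d, let g ∈ ℝ^d satisfy ‖g − ∇F(x)‖ ≤ δ for some δ ≥ 0, let 0 < α ≤ 1/L, and set x' := x − α g. Then F(x') ≤ F(x) − (α/2)‖∇F(x)‖² + 2 α δ ‖∇F(x)‖ + (L/2) α² δ². -/
/-!
Along the segment `t ↦ x + t • v`, the gap between `F` and the quadratic model
`F x + t ⟪∇F x, v⟫ + (L/2) t² ‖v‖²` has derivative `⟪∇F (x + t • v) - ∇F x, v⟫ - L t ‖v‖² ≤ 0`,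
which gives the descent lemma `F (x + v) ≤ F x + ⟪∇F x, v⟫ + (L/2) ‖v‖²`.
For `v = -α • g` with `‖g - ∇F x‖ ≤ δ`, the first-order term is at most
`-α ‖∇F x‖² + α δ ‖∇F x‖` and the curvature term at most `(L/2) α² (‖∇F x‖ + δ)²`;
as `L α ≤ 1`, the latter costs at most half of the decrease plus another `α δ ‖∇F x‖`.
-/

open scoped RealInnerProductSpace

section

variable {E : Type*} [NormedAddCommGroup E] [InnerProductSpace ℝ E] [CompleteSpace E]
  {F : E → ℝ} {L : ℝ}

theorem hasDerivAt_comp_add_smul (hF : Differentiable ℝ F) (x v : E) (t : ℝ) :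
    HasDerivAt (fun s : ℝ => F (x + s • v)) ⟪gradient F (x + t • v), v⟫ t := by
  have hline : HasDerivAt (fun s : ℝ => x + s • v) v t := by
    simpa using ((hasDerivAt_id t).smul_const v).const_add x
  exact (hF _).hasGradientAt.hasFDerivAt.comp_hasDerivAt t hline

theorem le_add_inner_gradient_add_sq_norm (hF : Differentiable ℝ F) {x : E}
    (hlip : ∀ y, ‖gradient F y - gradient F x‖ ≤ L * ‖y - x‖) (v : E) :
    F (x + v) ≤ F x + ⟪gradient F x, v⟫ + L / 2 * ‖v‖ ^ 2 := by
  set φ : ℝ → ℝ := fun t => F (x + t • v) - t * ⟪gradient F x, v⟫ - L / 2 * t ^ 2 * ‖v‖ ^ 2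
  have hφ : ∀ t, HasDerivAt φ
      (⟪gradient F (x + t • v), v⟫ - ⟪gradient F x, v⟫ - L * t * ‖v‖ ^ 2) t := by
    intro t
    refine (((hasDerivAt_comp_add_smul hF x v t).fun_sub
      ((hasDerivAt_id t).mul_const _)).fun_sub
      (((hasDerivAt_pow 2 t).const_mul (L / 2)).mul_const _)).congr_deriv ?_
    simp only [Nat.cast_ofNat]
    ring
  have hφ'_nonpos : ∀ t, 0 ≤ t →
      ⟪gradient F (x + t • v), v⟫ - ⟪gradient F x, v⟫ - L * t * ‖v‖ ^ 2 ≤ 0 := by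
    intro t ht
    rw [sub_nonpos]
    have hgrad : ‖gradient F (x + t • v) - gradient F x‖ ≤ L * t * ‖v‖ := by
      simpa [norm_smul, abs_of_nonneg ht, mul_assoc] using hlip (x + t • v)
    calc ⟪gradient F (x + t • v), v⟫ - ⟪gradient F x, v⟫
        = ⟪gradient F (x + t • v) - gradient F x, v⟫ := (inner_sub_left _ _ _).symm
      _ ≤ ‖gradient F (x + t • v) - gradient F x‖ * ‖v‖ := real_inner_le_norm _ _
      _ ≤ L * t * ‖v‖ * ‖v‖ := by gcongr
      _ = L * t * ‖v‖ ^ 2 := by ring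
  have hanti : AntitoneOn φ (Set.Icc 0 1) :=
    antitoneOn_of_hasDerivWithinAt_nonpos (convex_Icc 0 1)
      (fun t _ => (hφ t).continuousAt.continuousWithinAt)
      (fun t _ => (hφ t).hasDerivWithinAt)
      (fun t ht => hφ'_nonpos t (interior_subset ht).1)
  have hφ01 := hanti (by simp) (by simp) zero_le_one
  simp only [φ, zero_smul, one_smul, add_zero, zero_mul, one_mul, one_pow, sub_zero,
    ne_eq, OfNat.ofNat_ne_zero, not_false_eq_true, zero_pow, mul_zero] at hφ01
  linarith

end

theorem inner_neg_smul_add_sq_norm_le {E : Type*} [NormedAddCommGroup E]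
    [InnerProductSpace ℝ E] {G g : E} {α L δ : ℝ} (hα : 0 < α) (hL : 0 ≤ L) (hLα : L * α ≤ 1)
    (hg : ‖g - G‖ ≤ δ) :
    ⟪G, -(α • g)⟫ + L / 2 * ‖-(α • g)‖ ^ 2
      ≤ -(α / 2) * ‖G‖ ^ 2 + 2 * α * δ * ‖G‖ + L / 2 * α ^ 2 * δ ^ 2 := by
  rw [inner_neg_right, real_inner_smul_right, norm_neg, norm_smul, Real.norm_of_nonneg hα.le]
  have hδ : 0 ≤ δ := (norm_nonneg _).trans hg
  have hinner : ‖G‖ ^ 2 - δ * ‖G‖ ≤ ⟪G, g⟫ := by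
    have h := real_inner_le_norm G (G - g)
    rw [inner_sub_right, real_inner_self_eq_norm_sq, norm_sub_rev] at h
    nlinarith [norm_nonneg G]
  have hnorm : ‖g‖ ^ 2 ≤ (‖G‖ + δ) ^ 2 := by
    gcongr
    exact (norm_le_norm_add_norm_sub' g G).trans (by linarith)
  nlinarith [mul_le_mul_of_nonneg_left hinner hα.le,
    mul_le_mul_of_nonneg_left hnorm (by positivity : 0 ≤ L / 2 * α ^ 2),
    mul_nonneg (sub_nonneg.2 hLα) (by positivity : 0 ≤ α * ‖G‖ ^ 2),
    mul_nonneg (sub_nonneg.2 hLα) (by positivity : 0 ≤ α * δ * ‖G‖)]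

theorem descent_step_inexact_gradient_general {d : ℕ}
    (F : EuclideanSpace ℝ (Fin d) → ℝ) (L : ℝ)
    (hdiff : Differentiable ℝ F)
    (hlip : ∀ x y, ‖gradient F x - gradient F y‖ ≤ L * ‖x - y‖)
    (x g : EuclideanSpace ℝ (Fin d)) (δ : ℝ)
    (hg : ‖g - gradient F x‖ ≤ δ)
    (α : ℝ) (hα : 0 < α) (hαL : α ≤ 1 / L) :
    F (x - α • g) ≤ F x - (α / 2) * ‖gradient F x‖ ^ 2
      + 2 * α * δ * ‖gradient F x‖ + (L / 2) * α ^ 2 * δ ^ 2 := by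
  have hL : 0 < L := one_div_pos.mp (hα.trans_le hαL)
  have hstep := le_add_inner_gradient_add_sq_norm hdiff (fun y => hlip y x) (-(α • g))
  have hmodel := inner_neg_smul_add_sq_norm_le hα hL.le ((le_div_iff₀' hL).mp hαL) hg
  rw [← sub_eq_add_neg] at hstep
  linarith

/-- One inexact gradient step on an `L`-smooth function: if `F : ℝ^d → ℝ` is
differentiable with `L`-Lipschitz gradient, `g` approximates `∇F(x)` up to
drift `δ`, and `0 < α ≤ 1/L`, then the step `x' = x - α g` satisfies
`F(x') ≤ F(x) - (α/2)‖∇F(x)‖² + 2αδ‖∇F(x)‖ + (L/2)α²δ²`. -/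
theorem descent_step_inexact_gradient {d : ℕ}
    (F : EuclideanSpace ℝ (Fin d) → ℝ) (L : ℝ) (hL : 0 < L)
    (hdiff : Differentiable ℝ F)
    (hlip : ∀ x y, ‖gradient F x - gradient F y‖ ≤ L * ‖x - y‖)
    (x g : EuclideanSpace ℝ (Fin d)) (δ : ℝ) (hδ : 0 ≤ δ)
    (hg : ‖g - gradient F x‖ ≤ δ)
    (α : ℝ) (hα : 0 < α) (hαL : α ≤ 1 / L) :
    F (x - α • g) ≤ F x - (α / 2) * ‖gradient F x‖ ^ 2
      + 2 * α * δ * ‖gradient F x‖ + (L / 2) * α ^ 2 * δ ^ 2 :=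
  descent_step_inexact_gradient_general F L hdiff hlip x g δ hg α hα hαL
end

section
/- For each t ∈ {0, …, T−1} let ℓ_t : ℝ^d → ℝ be convex and differentiable with ‖∇ℓ_t(y)‖ ≤ G for all y, and let u_t ∈ ℝ^d be a global minimizer of ℓ_t. Let the iterates be x_{t+1} = x_t − α ∇ℓ_t(x_t) with constant step size α > 0. Suppose ‖x_t − u_t‖ ≤ D and ‖x_t − u_{t−1}‖ ≤ D for all applicable t. Then the dynamic regret R_T := Σ_{t=0}^{T−1} (ℓ_t(x_t) − ℓ_t(u_t)) satisfies R_T ≤ ‖x_0 − u_0‖²/(2α) + (G²/2) α T + (D/α) · CV_T, where CV_T := Σ_{t=1}^{T−1} ‖u_t − u_{t−1}‖ is the cumulative variation of the per-round minimizers. -/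
/-! A gradient step combined with the first-order convexity inequality bounds the regret of
round `t` by `(‖x t - u t‖² - ‖x (t+1) - u t‖²) / (2α) + αG²/2`. Summed over the rounds these
squared distances would telescope, were it not for the switch of comparator from `u (t-1)` to
`u t`; since `‖a‖² - ‖b‖² ≤ (‖a‖ + ‖b‖) ‖a - b‖`, each switch costs at most
`2D ‖u t - u (t-1)‖`. -/

open Finset InnerProductSpace

theorem ConvexOn.add_inner_sub_le_of_hasGradientAt {E : Type*} [NormedAddCommGroup E]
    [InnerProductSpace ℝ E] [CompleteSpace E] {s : Set E} {f : E → ℝ} {g x y : E}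
    (hf : ConvexOn ℝ s f) (hx : x ∈ s) (hy : y ∈ s) (hg : HasGradientAt f g x) :
    f x + ⟪g, y - x⟫_ℝ ≤ f y := by
  have hline : HasDerivAt (f ∘ AffineMap.lineMap (k := ℝ) x y) ⟪g, y - x⟫_ℝ 0 := by
    have hg' : HasFDerivAt f (toDual ℝ E g) (AffineMap.lineMap x y (0 : ℝ)) := by
      simpa using hg.hasFDerivAt
    simpa using hg'.comp_hasDerivAt (0 : ℝ) AffineMap.hasDerivAt_lineMap
  have hslope := (hf.comp_affineMap (AffineMap.lineMap x y)).le_slope_of_hasDerivAt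
    (by simpa using hx) (by simpa using hy) zero_lt_one hline
  simp only [slope, sub_zero, inv_one, Function.comp_apply, AffineMap.lineMap_apply_one,
    AffineMap.lineMap_apply_zero, vsub_eq_sub, smul_eq_mul, one_mul] at hslope
  linarith

theorem sq_norm_sub_sq_norm_le {E : Type*} [SeminormedAddCommGroup E] (a b : E) :
    ‖a‖ ^ 2 - ‖b‖ ^ 2 ≤ (‖a‖ + ‖b‖) * ‖a - b‖ := by
  rw [sq_sub_sq]
  exact mul_le_mul_of_nonneg_left (le_trans (le_abs_self _) (abs_norm_sub_norm_le a b))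
    (by positivity)

theorem norm_sub_smul_sub_sq {E : Type*} [NormedAddCommGroup E] [InnerProductSpace ℝ E]
    (x g u : E) (α : ℝ) :
    ‖x - α • g - u‖ ^ 2 = ‖x - u‖ ^ 2 - 2 * α * ⟪g, x - u⟫_ℝ + α ^ 2 * ‖g‖ ^ 2 := by
  rw [sub_right_comm, norm_sub_sq_real, real_inner_smul_right, norm_smul, real_inner_comm,
    mul_pow, Real.norm_eq_abs, sq_abs]
  ring

theorem sum_range_sub_le_add_sum_Ico (A B : ℕ → ℝ) (hA : 0 ≤ A 0) (hB : ∀ t, 0 ≤ B t) (T : ℕ) :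
    ∑ t ∈ range T, (A t - B t) ≤ A 0 + ∑ t ∈ Ico 1 T, (A t - B (t - 1)) := by
  cases T with
  | zero => simpa using hA
  | succ n =>
    rw [sum_Ico_eq_sum_range, sum_sub_distrib, sum_range_succ' A, sum_range_succ B]
    simp only [add_tsub_cancel_right, add_comm 1, sum_sub_distrib]
    linarith [hB n]

theorem ConvexOn.sub_le_of_gradient_step {E : Type*} [NormedAddCommGroup E]
    [InnerProductSpace ℝ E] [CompleteSpace E] {s : Set E} {f : E → ℝ} {g x u : E} {α G : ℝ}
    (hf : ConvexOn ℝ s f) (hx : x ∈ s) (hu : u ∈ s) (hg : HasGradientAt f g x)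
    (hgG : ‖g‖ ≤ G) (hα : 0 < α) :
    f x - f u ≤ (‖x - u‖ ^ 2 - ‖x - α • g - u‖ ^ 2) / (2 * α) + α / 2 * G ^ 2 := by
  have hfirst := hf.add_inner_sub_le_of_hasGradientAt hx hu hg
  have hdescent : (‖x - u‖ ^ 2 - ‖x - α • g - u‖ ^ 2) / (2 * α)
      = ⟪g, x - u⟫_ℝ - α / 2 * ‖g‖ ^ 2 := by
    rw [norm_sub_smul_sub_sq]
    field_simp
    ring
  have hflip : ⟪g, u - x⟫_ℝ = -⟪g, x - u⟫_ℝ := by rw [← inner_neg_right, neg_sub]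
  have hsq : α / 2 * ‖g‖ ^ 2 ≤ α / 2 * G ^ 2 := by gcongr
  linarith

theorem ogd_dynamic_regret_general {d : ℕ} (T : ℕ)
    (ℓ : ℕ → EuclideanSpace ℝ (Fin d) → ℝ) (G D α : ℝ) (hα : 0 < α)
    (hconv : ∀ t < T, ConvexOn ℝ Set.univ (ℓ t))
    (hdiff : ∀ t < T, Differentiable ℝ (ℓ t))
    (hG : ∀ t < T, ∀ y, ‖gradient (ℓ t) y‖ ≤ G)
    (u : ℕ → EuclideanSpace ℝ (Fin d))
    (x : ℕ → EuclideanSpace ℝ (Fin d))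
    (hiter : ∀ t < T, x (t + 1) = x t - α • gradient (ℓ t) (x t))
    (hD1 : ∀ t < T, ‖x t - u t‖ ≤ D)
    (hD2 : ∀ t, 1 ≤ t → t < T → ‖x t - u (t - 1)‖ ≤ D) :
    ∑ t ∈ Finset.range T, (ℓ t (x t) - ℓ t (u t))
      ≤ ‖x 0 - u 0‖ ^ 2 / (2 * α) + (G ^ 2 / 2) * α * T
        + (D / α) * ∑ t ∈ Finset.Ico 1 T, ‖u t - u (t - 1)‖ := by
  set A : ℕ → ℝ := fun t => ‖x t - u t‖ ^ 2
  set B : ℕ → ℝ := fun t => ‖x (t + 1) - u t‖ ^ 2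
  have hround : ∀ t ∈ range T, ℓ t (x t) - ℓ t (u t) ≤ (A t - B t) / (2 * α) + α / 2 * G ^ 2 := by
    intro t ht
    rw [mem_range] at ht
    simpa only [A, B, hiter t ht] using (hconv t ht).sub_le_of_gradient_step (Set.mem_univ _)
      (Set.mem_univ _) (hdiff t ht (x t)).hasGradientAt (hG t ht (x t)) hα
  have hshift : ∀ t ∈ Ico 1 T, A t - B (t - 1) ≤ 2 * D * ‖u t - u (t - 1)‖ := by
    intro t ht
    obtain ⟨h1, h2⟩ := mem_Ico.mp ht
    have hB : B (t - 1) = ‖x t - u (t - 1)‖ ^ 2 := by simp only [B, Nat.sub_add_cancel h1]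
    calc A t - B (t - 1) ≤ (‖x t - u t‖ + ‖x t - u (t - 1)‖) * ‖u t - u (t - 1)‖ := by
          rw [hB, norm_sub_rev (u t), ← sub_sub_sub_cancel_left (u t) (u (t - 1)) (x t)]
          exact sq_norm_sub_sq_norm_le _ _
      _ ≤ 2 * D * ‖u t - u (t - 1)‖ := by
          gcongr; linarith [hD1 t h2, hD2 t h1 h2]
  calc ∑ t ∈ range T, (ℓ t (x t) - ℓ t (u t))
      ≤ ∑ t ∈ range T, ((A t - B t) / (2 * α) + α / 2 * G ^ 2) := sum_le_sum hround
    _ = (∑ t ∈ range T, (A t - B t)) / (2 * α) + (G ^ 2 / 2) * α * T := by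
        rw [sum_add_distrib, ← sum_div, sum_const, card_range, nsmul_eq_mul]; ring
    _ ≤ (A 0 + ∑ t ∈ Ico 1 T, (A t - B (t - 1))) / (2 * α) + (G ^ 2 / 2) * α * T := by
        gcongr
        exact sum_range_sub_le_add_sum_Ico A B (by positivity) (fun _ => by positivity) T
    _ ≤ (A 0 + ∑ t ∈ Ico 1 T, 2 * D * ‖u t - u (t - 1)‖) / (2 * α) + (G ^ 2 / 2) * α * T := by
        gcongr with t ht
        exact hshift t ht
    _ = ‖x 0 - u 0‖ ^ 2 / (2 * α) + (G ^ 2 / 2) * α * T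
        + (D / α) * ∑ t ∈ Ico 1 T, ‖u t - u (t - 1)‖ := by
        rw [← mul_sum]; field_simp; ring

/-- Dynamic regret bound for online gradient descent: with convex
differentiable per-round losses `ℓ t` whose gradients are bounded by `G`,
per-round global minimizers `u t`, iterates `x (t+1) = x t - α ∇ℓ_t(x t)`
with constant step size `α > 0`, and uniform distance bounds
`‖x t - u t‖ ≤ D` and `‖x t - u (t-1)‖ ≤ D`, the dynamic regret satisfies
`R_T ≤ ‖x 0 - u 0‖²/(2α) + (G²/2) α T + (D/α) · CV_T`, where
`CV_T = ∑_{t=1}^{T-1} ‖u t - u (t-1)‖`. -/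
theorem ogd_dynamic_regret {d : ℕ} (T : ℕ)
    (ℓ : ℕ → EuclideanSpace ℝ (Fin d) → ℝ) (G D α : ℝ) (hα : 0 < α)
    (hconv : ∀ t < T, ConvexOn ℝ Set.univ (ℓ t))
    (hdiff : ∀ t < T, Differentiable ℝ (ℓ t))
    (hG : ∀ t < T, ∀ y, ‖gradient (ℓ t) y‖ ≤ G)
    (u : ℕ → EuclideanSpace ℝ (Fin d))
    (hu : ∀ t < T, ∀ y, ℓ t (u t) ≤ ℓ t y)
    (x : ℕ → EuclideanSpace ℝ (Fin d))
    (hiter : ∀ t < T, x (t + 1) = x t - α • gradient (ℓ t) (x t))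
    (hD1 : ∀ t < T, ‖x t - u t‖ ≤ D)
    (hD2 : ∀ t, 1 ≤ t → t < T → ‖x t - u (t - 1)‖ ≤ D) :
    ∑ t ∈ Finset.range T, (ℓ t (x t) - ℓ t (u t))
      ≤ ‖x 0 - u 0‖ ^ 2 / (2 * α) + (G ^ 2 / 2) * α * T
        + (D / α) * ∑ t ∈ Finset.Ico 1 T, ‖u t - u (t - 1)‖ :=
  ogd_dynamic_regret_general T ℓ G D α hα hconv hdiff hG u x hiter hD1 hD2
end
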